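/- arXiv:1903.07207 — 2 statements merged into one kernel-verified Lean document; each statement's English description precedes it below -/
import Mathlib

section
/- Let f(z) = (1/2)·Log((1+z)/(1−z)) on the open unit disk D, where Log denotes the principal branch of the logarithm. Then f is analytic and univalent on D with f(0) = 0 and f'(0) = 1, sup_{z ∈ D} (1 − |z|²)·|f''(z)/f'(z)| = 2, and f(D) is the infinite strip {w ∈ ℂ : |Im w| < π/4}; in particular f(D) is unbounded and hence not a radial John disk. This shows that the constant 2 in the criterion 'sup_{z ∈ D} (1 − |z|²)·|h''(z)/h'(z)| < 2 implies f(D) is a radial John disk' is best possible. -/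
open Complex Metric Set ComplexConjugate

/-- The radial John disk condition for `Ω = f(𝔻)` with John center `f 0`. -/
def IsRadialJohnDisk (f : ℂ → ℂ) (Ω : Set ℂ) : Prop :=
  Bornology.IsBounded Ω ∧
  ∃ c : ℝ, 1 ≤ c ∧ ∀ z ∈ Metric.ball (0 : ℂ) 1, ∀ t ∈ Set.Icc (0 : ℝ) 1,
    eVariationOn (fun s : ℝ => f ((s : ℂ) * z)) (Set.Icc t 1) ≤
      ENNReal.ofReal (c * Metric.infDist (f ((t : ℂ) * z)) (frontier Ω))

lemma aux_sub_ne {z : ℂ} (hz : ‖z‖ < 1) : (1:ℂ) - z ≠ 0 := by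
  intro h
  have : z = 1 := by linear_combination -h
  rw [this] at hz; simp at hz

lemma aux_add_ne {z : ℂ} (hz : ‖z‖ < 1) : (1:ℂ) + z ≠ 0 := by
  intro h
  have : z = -1 := by linear_combination h
  rw [this] at hz; simp at hz

lemma aux_sq_ne {z : ℂ} (hz : ‖z‖ < 1) : (1:ℂ) - z^2 ≠ 0 := by
  have : (1:ℂ) - z^2 = (1 - z) * (1 + z) := by ring
  rw [this]
  exact mul_ne_zero (aux_sub_ne hz) (aux_add_ne hz)

lemma aux_sq_lt {z : ℂ} (hz : ‖z‖ < 1) : z.re^2 + z.im^2 < 1 := by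
  have h1 : ‖z‖ ^ 2 = z.re^2 + z.im^2 := by
    rw [Complex.sq_norm, Complex.normSq_apply]; ring
  nlinarith [norm_nonneg z]

lemma aux_re_pos {z : ℂ} (hz : ‖z‖ < 1) : 0 < (((1+z)/(1-z)).re) := by
  have h1 := aux_sub_ne hz
  have hn : 0 < Complex.normSq (1 - z) := by
    simpa [Complex.normSq_pos] using h1
  have habs := aux_sq_lt hz
  have h2 : (((1+z)/(1-z)).re) = (1 - (z.re^2 + z.im^2)) / Complex.normSq (1-z) := by
    rw [Complex.div_re]
    simp [Complex.normSq_apply]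
    ring
  rw [h2]
  have : 0 < 1 - (z.re^2 + z.im^2) := by linarith
  positivity

lemma aux_hasDerivAt {z : ℂ} (hz : ‖z‖ < 1) :
    HasDerivAt (fun w => (1/2 : ℂ) * Complex.log ((1 + w) / (1 - w))) ((1 - z^2)⁻¹) z := by
  have h1 := aux_sub_ne hz
  have h2 := aux_add_ne hz
  have hs : (1+z)/(1-z) ∈ Complex.slitPlane := Or.inl (aux_re_pos hz)
  have hg : HasDerivAt (fun w => (1+w)/(1-w)) (2/(1-z)^2) z := by
    have h3 : HasDerivAt (fun w : ℂ => (1:ℂ)+w) 1 z := by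
      simpa using (hasDerivAt_id z).const_add (1:ℂ)
    have h4 : HasDerivAt (fun w : ℂ => (1:ℂ)-w) (-1) z := by
      simpa using (hasDerivAt_id z).const_sub (1:ℂ)
    have := h3.div h4 h1
    refine HasDerivAt.congr_deriv this ?_
    field_simp
    ring
  have hlog : HasDerivAt Complex.log (((1+z)/(1-z))⁻¹) ((1+z)/(1-z)) :=
    Complex.hasDerivAt_log hs
  have hc := (hlog.comp z hg).const_mul (1/2 : ℂ)
  have hsq := aux_sq_ne hz
  refine HasDerivAt.congr_deriv hc ?_
  field_simp
  ring

lemma aux_deriv_f (f : ℂ → ℂ)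
    (hf : ∀ z, f z = (1 / 2 : ℂ) * Complex.log ((1 + z) / (1 - z)))
    {z : ℂ} (hz : ‖z‖ < 1) : HasDerivAt f ((1 - z^2)⁻¹) z := by
  have : f = fun w => (1/2 : ℂ) * Complex.log ((1 + w) / (1 - w)) := funext hf
  rw [this]
  exact aux_hasDerivAt hz

lemma aux_deriv_f' (f : ℂ → ℂ)
    (hf : ∀ z, f z = (1 / 2 : ℂ) * Complex.log ((1 + z) / (1 - z)))
    {z : ℂ} (hz : ‖z‖ < 1) : deriv f z = (1 - z^2)⁻¹ :=
  (aux_deriv_f f hf hz).deriv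

lemma aux_hasDerivAt_g {z : ℂ} (hz : ‖z‖ < 1) :
    HasDerivAt (fun w : ℂ => (1 - w^2)⁻¹) (2*z/(1-z^2)^2) z := by
  have h0 : HasDerivAt (fun w : ℂ => 1 - w^2) (-(2*z)) z := by
    simpa using ((hasDerivAt_pow 2 z).const_sub (1:ℂ))
  have := h0.inv (aux_sq_ne hz)
  refine HasDerivAt.congr_deriv this ?_
  ring

lemma aux_deriv2 (f : ℂ → ℂ)
    (hf : ∀ z, f z = (1 / 2 : ℂ) * Complex.log ((1 + z) / (1 - z)))
    {z : ℂ} (hz : ‖z‖ < 1) : deriv (deriv f) z = 2*z/(1-z^2)^2 := by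
  have hev : deriv f =ᶠ[nhds z] (fun w : ℂ => (1 - w^2)⁻¹) := by
    have hmem : z ∈ Metric.ball (0:ℂ) 1 :=
      mem_ball_zero_iff.mpr (by simpa using hz)
    filter_upwards [Metric.isOpen_ball.mem_nhds hmem] with w hw
    exact aux_deriv_f' f hf (by simpa using mem_ball_zero_iff.mp hw)
  rw [hev.deriv_eq]
  exact (aux_hasDerivAt_g hz).deriv

lemma aux_exp_eq (f : ℂ → ℂ)
    (hf : ∀ z, f z = (1 / 2 : ℂ) * Complex.log ((1 + z) / (1 - z)))
    {z : ℂ} (hz : ‖z‖ < 1) : Complex.exp (2 * f z) = (1+z)/(1-z) := by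
  rw [hf z, show (2:ℂ) * ((1/2) * Complex.log ((1+z)/(1-z))) = Complex.log ((1+z)/(1-z)) by ring]
  exact Complex.exp_log (div_ne_zero (aux_add_ne hz) (aux_sub_ne hz))

lemma aux_strip (f : ℂ → ℂ)
    (hf : ∀ z, f z = (1 / 2 : ℂ) * Complex.log ((1 + z) / (1 - z))) :
    f '' Metric.ball (0 : ℂ) 1 = {w : ℂ | |w.im| < Real.pi / 4} := by
  ext w
  simp only [Set.mem_image, Set.mem_setOf_eq]
  constructor
  · rintro ⟨z, hz, rfl⟩
    have hz' : ‖z‖ < 1 := by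
      simpa using mem_ball_zero_iff.mp hz
    have harg : |((1+z)/(1-z)).arg| < Real.pi/2 :=
      Complex.abs_arg_lt_pi_div_two_iff.mpr (Or.inl (aux_re_pos hz'))
    have him : (f z).im = ((1+z)/(1-z)).arg / 2 := by
      rw [hf z]
      simp [Complex.mul_im, Complex.log_im]
      ring
    rw [him]
    rw [abs_div, show |(2:ℝ)| = 2 by norm_num]
    linarith
  · intro hw
    have hpi := Real.pi_pos
    have hw' := abs_lt.mp hw
    set u := Complex.exp (2*w) with hu
    have hure : 0 < u.re := by
      rw [hu, Complex.exp_re]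
      have h2 : ((2:ℂ)*w).im = 2*w.im := by simp
      rw [h2]
      have hcos : 0 < Real.cos (2*w.im) := by
        apply Real.cos_pos_of_mem_Ioo
        constructor <;> [linarith [hw'.1]; linarith [hw'.2]]
      positivity
    have hu1 : u + 1 ≠ 0 := by
      intro h
      have : u.re + 1 = 0 := by
        have := congrArg Complex.re h
        simpa using this
      linarith
    set z := (u-1)/(u+1) with hzdef
    have habs1 : 0 < ‖u+1‖ := by
      simpa [norm_pos_iff] using hu1
    have hz : ‖z‖ < 1 := by
      rw [hzdef, norm_div, div_lt_one habs1]
      have hsq : ‖u-1‖^2 < ‖u+1‖^2 := by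
        rw [Complex.sq_norm, Complex.sq_norm, Complex.normSq_apply, Complex.normSq_apply]
        simp only [Complex.sub_re, Complex.sub_im, Complex.add_re, Complex.add_im,
          Complex.one_re, Complex.one_im]
        nlinarith
      nlinarith [norm_nonneg (u-1), norm_nonneg (u+1)]
    refine ⟨z, mem_ball_zero_iff.mpr (by simpa using hz), ?_⟩
    have hfrac : (1+z)/(1-z) = u := by
      rw [hzdef]
      field_simp
      ring
    rw [hf z, hfrac, hu, Complex.log_exp ?_ ?_]
    · ring
    · simp only [Complex.mul_im]
      simp
      linarith [hw'.1]
    · simp only [Complex.mul_im]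
      simp
      linarith [hw'.2]

lemma aux_val (f : ℂ → ℂ)
    (hf : ∀ z, f z = (1 / 2 : ℂ) * Complex.log ((1 + z) / (1 - z)))
    {z : ℂ} (hz : ‖z‖ < 1) :
    ‖deriv (deriv f) z / deriv f z‖
      = 2 * ‖z‖ / ‖1 - z^2‖ := by
  rw [aux_deriv2 f hf hz, aux_deriv_f' f hf hz]
  have h : (2*z/(1-z^2)^2) / ((1-z^2)⁻¹) = 2*z/(1-z^2) := by
    have h2 := aux_sq_ne hz
    field_simp
  rw [h, norm_div, norm_mul]
  simp

lemma aux_sup (f : ℂ → ℂ)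
    (hf : ∀ z, f z = (1 / 2 : ℂ) * Complex.log ((1 + z) / (1 - z))) :
    sSup ((fun z : ℂ =>
        (1 - ‖z‖ ^ 2) * ‖deriv (deriv f) z / deriv f z‖) ''
      Metric.ball (0 : ℂ) 1) = 2 := by
  apply csSup_eq_of_forall_le_of_forall_lt_exists_gt
  · exact ⟨_, Set.mem_image_of_mem _ (Metric.mem_ball_self one_pos)⟩
  · rintro a ⟨z, hz, rfl⟩
    have hz' : ‖z‖ < 1 := by
      simpa using mem_ball_zero_iff.mp hz
    dsimp only
    rw [aux_val f hf hz']
    set a1 := ‖z‖ with ha1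
    set b := ‖1 - z^2‖ with hb
    have hb0 : 0 < b := by
      simpa [hb, norm_pos_iff] using aux_sq_ne hz'
    have hble : 1 - a1^2 ≤ b := by
      have := norm_sub_norm_le (1:ℂ) (z^2)
      simpa [norm_pow] using this
    have ha10 : 0 ≤ a1 := norm_nonneg z
    rw [show (1 - a1^2) * (2*a1/b) = (1-a1^2)*(2*a1)/b by ring, div_le_iff₀ hb0]
    nlinarith
  · intro w hw
    set r : ℝ := max (1/2) ((w+2)/4) with hr
    have hr0 : 0 ≤ r := le_trans (by norm_num) (le_max_left _ _)
    have hr1 : r < 1 := by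
      rw [hr]
      apply max_lt <;> [norm_num; linarith]
    have hrw : w < 2*r := by
      have : (w+2)/4 ≤ r := le_max_right _ _
      linarith
    refine ⟨_, Set.mem_image_of_mem _ (show (r:ℂ) ∈ Metric.ball (0:ℂ) 1 from
      mem_ball_zero_iff.mpr (by simpa [Complex.norm_real, _root_.abs_of_nonneg hr0] using hr1)), ?_⟩
    have habs : ‖(r:ℂ)‖ = r := by
      simp [Complex.norm_real, _root_.abs_of_nonneg hr0]
    have habsr : ‖((r:ℂ))‖ < 1 := by rw [habs]; exact hr1
    rw [aux_val f hf habsr, habs]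
    have hcast : (1:ℂ) - (r:ℂ)^2 = ((1 - r^2 : ℝ) : ℂ) := by push_cast; ring
    have hpos : (0:ℝ) < 1 - r^2 := by nlinarith
    rw [hcast, Complex.norm_real, Real.norm_eq_abs, _root_.abs_of_pos hpos]
    rw [show (1 - r^2) * (2*r/(1-r^2)) = 2*r from by field_simp]
    exact hrw

theorem stmt_7 (f : ℂ → ℂ)
    (hf : ∀ z, f z = (1 / 2 : ℂ) * Complex.log ((1 + z) / (1 - z))) :
    DifferentiableOn ℂ f (Metric.ball (0 : ℂ) 1) ∧
    Set.InjOn f (Metric.ball (0 : ℂ) 1) ∧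
    f 0 = 0 ∧ deriv f 0 = 1 ∧
    sSup ((fun z : ℂ =>
        (1 - ‖z‖ ^ 2) * ‖deriv (deriv f) z / deriv f z‖) ''
      Metric.ball (0 : ℂ) 1) = 2 ∧
    f '' Metric.ball (0 : ℂ) 1 = {w : ℂ | |w.im| < Real.pi / 4} ∧
    ¬ Bornology.IsBounded (f '' Metric.ball (0 : ℂ) 1) ∧
    ¬ IsRadialJohnDisk f (f '' Metric.ball (0 : ℂ) 1) := by
  have hball : ∀ {z : ℂ}, z ∈ Metric.ball (0:ℂ) 1 → ‖z‖ < 1 := fun hz => by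
    simpa using mem_ball_zero_iff.mp hz
  have hnb : ¬ Bornology.IsBounded (f '' Metric.ball (0 : ℂ) 1) := by
    rw [aux_strip f hf]
    intro hb
    obtain ⟨C, hC⟩ := isBounded_iff_forall_norm_le.mp hb
    set x : ℝ := max C 0 + 1 with hx
    have hx0 : 0 ≤ x := by positivity
    have hmem : ((x : ℝ) : ℂ) ∈ {w : ℂ | |w.im| < Real.pi/4} := by
      simp only [Set.mem_setOf_eq, Complex.ofReal_im, abs_zero]
      positivity
    have hle := hC _ hmem
    rw [Complex.norm_real, Real.norm_eq_abs, _root_.abs_of_nonneg hx0] at hle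
    have : C ≤ max C 0 := le_max_left _ _
    linarith
  refine ⟨?_, ?_, ?_, ?_, aux_sup f hf, aux_strip f hf, hnb, fun hJ => hnb hJ.1⟩
  · intro z hz
    exact (aux_deriv_f f hf (hball hz)).differentiableAt.differentiableWithinAt
  · intro z hz w hw h
    have h1 := aux_exp_eq f hf (hball hz)
    have h2 := aux_exp_eq f hf (hball hw)
    rw [h] at h1
    have h3 : (1+z)/(1-z) = (1+w)/(1-w) := h1.symm.trans h2
    rw [div_eq_div_iff (aux_sub_ne (hball hz)) (aux_sub_ne (hball hw))] at h3
    linear_combination h3/2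
  · rw [hf 0]; simp
  · rw [aux_deriv_f' f hf (by simp)]
    norm_num
end

section
/- Let 1 ≤ K ≤ 3, set k = (K−1)/(K+1), and let f = h + conj(g) ∈ S_H^0(K, Ω). If limsup_{|z|→1⁻} (1 − |z|²)·Re(z·P_f(z)) < 1 + k, then there exist constants C > 0 and δ ∈ (0,1) such that for every ζ with |ζ| = 1 and all 0 ≤ r ≤ ρ < 1, ‖D_f(ρζ)‖ ≤ C·‖D_f(rζ)‖·((1 − ρ)/(1 − r))^{δ−1}. -/
open Complex Metric Set ComplexConjugate

/-- Derivative of `Complex.abs` along a real curve, away from zero. -/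
lemma curve_abs_hasDerivAt {c : ℝ → ℂ} {c' : ℂ} {t : ℝ} (hc : HasDerivAt c c' t)
    (h0 : c t ≠ 0) :
    HasDerivAt (fun s => ‖c s‖) ((c' * conj (c t)).re / ‖c t‖) t := by
  have hre : HasDerivAt (fun s => (c s).re) c'.re t :=
    (Complex.reCLM.hasFDerivAt.comp_hasDerivAt t hc)
  have him : HasDerivAt (fun s => (c s).im) c'.im t :=
    (Complex.imCLM.hasFDerivAt.comp_hasDerivAt t hc)
  have hn : HasDerivAt (fun s => (c s).re ^ 2 + (c s).im ^ 2)
      (2 * (c t).re * c'.re + 2 * (c t).im * c'.im) t := by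
    have := ((hre.pow 2).add (him.pow 2))
    exact this.congr_deriv (by ring)
  have hn0 : (c t).re ^ 2 + (c t).im ^ 2 ≠ 0 := by
    have := Complex.normSq_pos.2 h0
    rw [Complex.normSq_apply] at this
    nlinarith
  have hsqrt := (Real.hasDerivAt_sqrt hn0).comp t hn
  have habs : (fun s => ‖c s‖) = fun s => Real.sqrt ((c s).re ^ 2 + (c s).im ^ 2) := by
    funext s
    rw [Complex.norm_def, Complex.normSq_apply]
    ring_nf
  rw [habs]
  refine hsqrt.congr_deriv ?_
  symm
  have hpos : (0:ℝ) < (c t).re ^ 2 + (c t).im ^ 2 := lt_of_le_of_ne (by positivity) (Ne.symm hn0)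
  have habs2 : ‖c t‖ = Real.sqrt ((c t).re ^ 2 + (c t).im ^ 2) := by
    rw [Complex.norm_def, Complex.normSq_apply]; ring_nf
  have hs0 : Real.sqrt ((c t).re ^ 2 + (c t).im ^ 2) > 0 := Real.sqrt_pos.2 hpos
  rw [habs2]
  simp only [Complex.mul_re, Complex.conj_re, Complex.conj_im]
  field_simp
  ring

lemma mobius_denom_ne {v₀ v : ℂ} (h₀ : ‖v₀‖ < 1) (h : ‖v‖ ≤ 1) :
    (1 : ℂ) - conj v₀ * v ≠ 0 := by
  intro hc
  have h1 : (1 : ℂ) = conj v₀ * v := by linear_combination hc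
  have := congrArg (‖·‖) h1
  rw [norm_mul, Complex.norm_conj, norm_one] at this
  nlinarith [norm_nonneg v, norm_nonneg v₀]

lemma mobius_abs_le {v₀ v : ℂ} (h₀ : ‖v₀‖ < 1) (h : ‖v‖ ≤ 1) :
    ‖(v - v₀) / (1 - conj v₀ * v)‖ ≤ 1 := by
  rw [norm_div, div_le_one (by
    exact (norm_pos_iff.mpr (mobius_denom_ne h₀ h)))]
  have h1 : ‖v - v₀‖ ^ 2 ≤ ‖1 - conj v₀ * v‖ ^ 2 := by
    rw [Complex.sq_norm, Complex.sq_norm, Complex.normSq_apply, Complex.normSq_apply]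
    have hv : v.re ^ 2 + v.im ^ 2 ≤ 1 := by
      have := Complex.sq_norm v; rw [Complex.normSq_apply] at this; nlinarith [norm_nonneg v]
    have hv₀ : v₀.re ^ 2 + v₀.im ^ 2 < 1 := by
      have := Complex.sq_norm v₀; rw [Complex.normSq_apply] at this; nlinarith [norm_nonneg v₀]
    simp only [Complex.sub_re, Complex.sub_im, Complex.mul_re, Complex.mul_im,
      Complex.one_re, Complex.one_im, Complex.conj_re, Complex.conj_im]
    nlinarith [sq_nonneg (1 - (v.re^2+v.im^2)), sq_nonneg (1 - (v₀.re^2+v₀.im^2))]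
  nlinarith [norm_nonneg (v - v₀), norm_nonneg (1 - conj v₀ * v)]

lemma mobius_abs_lt {v₀ v : ℂ} (h₀ : ‖v₀‖ < 1) (h : ‖v‖ < 1) :
    ‖(v - v₀) / (1 - conj v₀ * v)‖ < 1 := by
  rw [norm_div, div_lt_one (norm_pos_iff.mpr (mobius_denom_ne h₀ h.le))]
  have h1 : ‖v - v₀‖ ^ 2 < ‖1 - conj v₀ * v‖ ^ 2 := by
    rw [Complex.sq_norm, Complex.sq_norm, Complex.normSq_apply, Complex.normSq_apply]
    have hv : v.re ^ 2 + v.im ^ 2 < 1 := by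
      have := Complex.sq_norm v; rw [Complex.normSq_apply] at this; nlinarith [norm_nonneg v]
    have hv₀ : v₀.re ^ 2 + v₀.im ^ 2 < 1 := by
      have := Complex.sq_norm v₀; rw [Complex.normSq_apply] at this; nlinarith [norm_nonneg v₀]
    simp only [Complex.sub_re, Complex.sub_im, Complex.mul_re, Complex.mul_im,
      Complex.one_re, Complex.one_im, Complex.conj_re, Complex.conj_im]
    nlinarith [sq_nonneg (1 - (v.re^2+v.im^2)), sq_nonneg (1 - (v₀.re^2+v₀.im^2)),
      mul_pos (sub_pos.2 hv) (sub_pos.2 hv₀)]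
  nlinarith [norm_nonneg (v - v₀), norm_nonneg (1 - conj v₀ * v)]

/-- Schwarz–Pick inequality for a holomorphic self-map of the disk of radius `k`. -/
lemma schwarz_pick {ω : ℂ → ℂ} (hω : DifferentiableOn ℂ ω (ball (0:ℂ) 1)) {k : ℝ}
    (hk0 : 0 < k) (hωk : ∀ z ∈ ball (0:ℂ) 1, ‖ω z‖ ≤ k) {z₀ : ℂ}
    (hz₀ : z₀ ∈ ball (0:ℂ) 1) :
    ‖deriv ω z₀‖ * (1 - ‖z₀‖ ^ 2) * k ≤ k ^ 2 - ‖ω z₀‖ ^ 2 := by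
  have hz₀1 : ‖z₀‖ < 1 := by simpa [mem_ball, Complex.dist_eq] using hz₀
  by_cases hmax : ‖ω z₀‖ = k
  · have hm : IsMaxOn (norm ∘ ω) (ball (0:ℂ) 1) z₀ := by
      intro z hz
      simp only [Function.comp_apply]
      rw [hmax]; exact hωk z hz
    have heq := Complex.eqOn_of_isPreconnected_of_isMaxOn_norm
      (convex_ball (0:ℂ) 1).isPreconnected isOpen_ball hω hz₀ hm
    have hev : ω =ᶠ[nhds z₀] (fun _ => ω z₀) := by
      filter_upwards [isOpen_ball.mem_nhds hz₀] with z hz using heq hz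
    have : deriv ω z₀ = 0 := by
      rw [hev.deriv_eq]; exact deriv_const _ _
    rw [this]
    simp [hmax]
  · have hω0 : ‖ω z₀‖ < k := lt_of_le_of_ne (hωk z₀ hz₀) hmax
    set φ : ℂ → ℂ := fun z => ω z / (k : ℂ) with hφdef
    have hφd : DifferentiableOn ℂ φ (ball (0:ℂ) 1) := hω.div_const _
    have hφ1 : ∀ z ∈ ball (0:ℂ) 1, ‖φ z‖ ≤ 1 := by
      intro z hz
      rw [hφdef]
      simp only [norm_div, Complex.norm_real, Real.norm_eq_abs, abs_of_pos hk0]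
      exact (div_le_one hk0).2 (hωk z hz)
    set v₀ : ℂ := φ z₀ with hv₀def
    have hv₀1 : ‖v₀‖ < 1 := by
      rw [hv₀def, hφdef]
      simp only [norm_div, Complex.norm_real, Real.norm_eq_abs, abs_of_pos hk0]
      exact (div_lt_one hk0).2 hω0
    set T : ℂ → ℂ := fun u => (u + z₀) / (1 + conj z₀ * u) with hTdef
    have hTmaps : ∀ u ∈ ball (0:ℂ) 1, T u ∈ ball (0:ℂ) 1 := by
      intro u hu
      have hu1 : ‖u‖ < 1 := by simpa [mem_ball, Complex.dist_eq] using hu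
      have := mobius_abs_lt (v₀ := -z₀) (v := u) (by simpa using hz₀1) hu1
      simp only [map_neg, sub_neg_eq_add] at this
      rw [mem_ball, Complex.dist_eq, sub_zero]
      convert this using 2
      rw [hTdef]
      simp [sub_neg_eq_add]
    have hTden : ∀ u ∈ ball (0:ℂ) 1, (1:ℂ) + conj z₀ * u ≠ 0 := by
      intro u hu
      have hu1 : ‖u‖ < 1 := by simpa [mem_ball, Complex.dist_eq] using hu
      have := mobius_denom_ne (v₀ := -z₀) (v := u) (by simpa using hz₀1) hu1.le
      simpa [sub_neg_eq_add] using this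
    have hTd : DifferentiableOn ℂ T (ball (0:ℂ) 1) := by
      apply DifferentiableOn.div
      · exact (differentiable_id.add_const _).differentiableOn
      · exact (differentiableOn_const _).add
          ((differentiable_const _ |>.mul differentiable_id).differentiableOn)
      · exact hTden
    have hT0 : T 0 = z₀ := by rw [hTdef]; simp
    set ψ : ℂ → ℂ := fun u => (φ (T u) - v₀) / (1 - conj v₀ * φ (T u)) with hψdef
    have hψ0 : ψ 0 = 0 := by
      rw [hψdef]; simp [hT0, ← hv₀def]
    have hψle : ∀ u ∈ ball (0:ℂ) 1, ‖ψ u‖ ≤ 1 := fun u hu =>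
      mobius_abs_le hv₀1 (hφ1 _ (hTmaps u hu))
    have hψd : DifferentiableOn ℂ ψ (ball (0:ℂ) 1) := by
      have hφT : DifferentiableOn ℂ (fun u => φ (T u)) (ball (0:ℂ) 1) :=
        hφd.comp hTd (fun u hu => hTmaps u hu)
      apply DifferentiableOn.div
      · exact hφT.sub_const _
      · exact (differentiableOn_const _).sub (hφT.const_mul _)
      · exact fun u hu => mobius_denom_ne hv₀1 (hφ1 _ (hTmaps u hu))
    have hschwarz : ‖deriv ψ 0‖ ≤ 1 := by
      by_contra hcon
      push_neg at hcon
      set R₂ : ℝ := (1 + ‖deriv ψ 0‖) / 2 with hR₂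
      have hR₂1 : 1 < R₂ := by rw [hR₂]; linarith
      have hmaps : MapsTo ψ (ball (0:ℂ) 1) (ball (ψ 0) R₂) := by
        intro u hu
        rw [hψ0, mem_ball, Complex.dist_eq, sub_zero]
        exact lt_of_le_of_lt (hψle u hu) hR₂1
      have := Complex.norm_deriv_le_div_of_mapsTo_ball hψd (hmaps.mono_right ball_subset_closedBall) one_pos
      rw [div_one] at this
      rw [hR₂] at this
      linarith
    have hz₀mem : (0:ℂ) ∈ ball (0:ℂ) 1 := by simp
    have hωz₀ : HasDerivAt ω (deriv ω z₀) z₀ :=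
      ((hω.differentiableAt (isOpen_ball.mem_nhds hz₀)).hasDerivAt)
    have hφz₀ : HasDerivAt φ (deriv ω z₀ / (k:ℂ)) z₀ := hωz₀.div_const _
    have hTden0 : (1:ℂ) + conj z₀ * 0 ≠ 0 := by simpa using hTden 0 hz₀mem
    have hT'0 : HasDerivAt T (1 - z₀ * conj z₀) 0 := by
      have h1 : HasDerivAt (fun u : ℂ => u + z₀) 1 0 := (hasDerivAt_id _).add_const _
      have h2 : HasDerivAt (fun u : ℂ => (1:ℂ) + conj z₀ * u) (conj z₀) 0 := by
        simpa using ((hasDerivAt_id (0:ℂ)).const_mul (conj z₀)).const_add 1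
      have h3 := h1.div h2 hTden0
      refine h3.congr_deriv ?_
      simp
    have hφz₀' : HasDerivAt φ (deriv ω z₀ / (k:ℂ)) (T 0) := by rwa [hT0]
    have hφT0 : HasDerivAt (fun u => φ (T u))
        ((deriv ω z₀ / (k:ℂ)) * (1 - z₀ * conj z₀)) 0 := hφz₀'.comp (0:ℂ) hT'0
    set c : ℂ := (deriv ω z₀ / (k:ℂ)) * (1 - z₀ * conj z₀) with hcdef
    have hD0 : (1:ℂ) - conj v₀ * φ (T 0) = 1 - conj v₀ * v₀ := by rw [hT0]
    have hD0ne : (1:ℂ) - conj v₀ * v₀ ≠ 0 := by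
      have := mobius_denom_ne hv₀1 hv₀1.le
      exact this
    have hN : HasDerivAt (fun u => φ (T u) - v₀) c 0 := hφT0.sub_const _
    have hD : HasDerivAt (fun u => (1:ℂ) - conj v₀ * φ (T u)) (-(conj v₀ * c)) 0 := by
      simpa using ((hφT0.const_mul (conj v₀)).const_sub 1)
    have hψ' : HasDerivAt ψ (c / (1 - conj v₀ * v₀)) 0 := by
      have hDne : (1:ℂ) - conj v₀ * φ (T 0) ≠ 0 := by rw [hD0]; exact hD0ne
      have := hN.div hD hDne
      refine this.congr_deriv ?_
      rw [hT0, ← hv₀def, sub_self, zero_mul, sub_zero]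
      rw [div_eq_div_iff (pow_ne_zero 2 hD0ne) hD0ne]
      ring
    have hderivψ : deriv ψ 0 = c / (1 - conj v₀ * v₀) := hψ'.deriv
    rw [hderivψ] at hschwarz
    have habs1 : ‖1 - z₀ * conj z₀‖ = 1 - ‖z₀‖ ^ 2 := by
      rw [Complex.mul_conj, ← Complex.ofReal_one, ← Complex.ofReal_sub, Complex.norm_real, Real.norm_eq_abs,
        _root_.abs_of_nonneg (by rw [Complex.normSq_eq_norm_sq]; nlinarith [norm_nonneg z₀]),
        Complex.normSq_eq_norm_sq]
    have habs2 : ‖1 - conj v₀ * v₀‖ = 1 - ‖v₀‖ ^ 2 := by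
      rw [mul_comm, Complex.mul_conj, ← Complex.ofReal_one, ← Complex.ofReal_sub,
        Complex.norm_real, Real.norm_eq_abs,
        _root_.abs_of_nonneg (by rw [Complex.normSq_eq_norm_sq]; nlinarith [norm_nonneg v₀]),
        Complex.normSq_eq_norm_sq]
    rw [norm_div, hcdef, norm_mul, norm_div, habs1, habs2, Complex.norm_real, Real.norm_eq_abs,
      abs_of_pos hk0, div_le_one (by nlinarith [norm_nonneg v₀])] at hschwarz
    have hv₀abs : ‖v₀‖ = ‖ω z₀‖ / k := by
      rw [hv₀def, hφdef]
      simp [norm_div, abs_of_pos hk0]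
    rw [hv₀abs] at hschwarz
    have h1 : ‖deriv ω z₀‖ / k * (1 - ‖z₀‖ ^ 2)
        ≤ 1 - (‖ω z₀‖ / k) ^ 2 := hschwarz
    have hk2 : (0:ℝ) < k ^ 2 := by positivity
    rw [div_pow] at h1
    have := mul_le_mul_of_nonneg_right h1 (le_of_lt hk2)
    calc ‖deriv ω z₀‖ * (1 - ‖z₀‖ ^ 2) * k
        = (‖deriv ω z₀‖ / k * (1 - ‖z₀‖ ^ 2)) * k ^ 2 := by
          field_simp
      _ ≤ (1 - ‖ω z₀‖ ^ 2 / k ^ 2) * k ^ 2 := this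
      _ = k ^ 2 - ‖ω z₀‖ ^ 2 := by field_simp

/-- Core algebraic inequality for the logarithmic derivative of `|h'| + |g'|`. -/
lemma core_alg (x y s u M Kp : ℝ) (hx : 0 < x) (hy : 0 < y) (hyx : y < x)
    (h1 : s - u ≤ M * (x^2 - y^2)) (h2 : u * x^2 - s * y^2 ≤ Kp * (x*y) * (x^2 - y^2)) :
    s / x + u / y ≤ (M + Kp) * (x + y) := by
  have hxy : 0 < x * y := mul_pos hx hy
  have hcore : s * y + u * x ≤ (M + Kp) * ((x + y) * (x * y)) := by
    nlinarith [mul_le_mul_of_nonneg_left h1 hxy.le, h2, sub_pos.2 hyx,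
      mul_pos hxy (sub_pos.2 hyx)]
  have heq : s / x + u / y = (s * y + u * x) / (x * y) := by field_simp
  rw [heq, div_le_iff₀ hxy]
  calc s * y + u * x ≤ (M + Kp) * ((x + y) * (x * y)) := hcore
    _ = (M + Kp) * (x + y) * (x * y) := by ring

/-- Derivative along a radius. -/
lemma curve_hasDerivAt (F : ℂ → ℂ) (hF : DifferentiableOn ℂ F (ball (0:ℂ) 1)) (ζ : ℂ) (t : ℝ)
    (hz : (t:ℂ) * ζ ∈ ball (0:ℂ) 1) :
    HasDerivAt (fun s : ℝ => F ((s:ℂ) * ζ)) (ζ * deriv F ((t:ℂ) * ζ)) t := by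
  have h1 : HasDerivAt F (deriv F ((t:ℂ)*ζ)) ((t:ℂ)*ζ) :=
    (hF.differentiableAt (isOpen_ball.mem_nhds hz)).hasDerivAt
  have h2 : HasDerivAt (fun w : ℂ => w * ζ) ζ ((t:ℂ)) := by
    simpa using (hasDerivAt_id ((t:ℂ))).mul_const ζ
  have h3 : HasDerivAt (fun w : ℂ => F (w * ζ)) (deriv F ((t:ℂ)*ζ) * ζ) (t:ℂ) :=
    h1.comp ((t:ℂ)) h2
  have h4 := h3.comp_ofReal
  simpa [mul_comm] using h4

/-- Choice of the parameters `t₁` and `δ₀`. -/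
lemma numeric_choice (k m r₀ : ℝ) (hk0 : 0 ≤ k) (hk12 : k ≤ 1/2) (hm0 : 0 ≤ m)
    (hmk : m < 1 + k) (hr₀ : r₀ ∈ Set.Ico (0:ℝ) 1) :
    ∃ t₁ δ₀ : ℝ, (1/2 ≤ t₁ ∧ r₀ ≤ t₁ ∧ t₁ < 1) ∧ (0 < δ₀ ∧ δ₀ < 1) ∧
      ∀ t, t₁ ≤ t → t < 1 → m / (t * (1 - t^2)) + k / (1 - t^2) ≤ (1 - δ₀) / (1 - t) := by
  have hm2' : m + k < 2 := by linarith
  set η : ℝ := (m + k) / 2 with hη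
  have hη0 : 0 ≤ η := by positivity
  have hη1 : η < 1 := by rw [hη]; linarith
  set e : ℝ := (1 - η) / 5 with he
  have he0 : 0 < e := by rw [he]; linarith
  have he15 : e ≤ 1/5 := by rw [he]; linarith
  refine ⟨max r₀ (1 - e), (1 - η)/2, ⟨?_, le_max_left _ _, ?_⟩, ⟨by linarith, by linarith⟩, ?_⟩
  · exact le_trans (by linarith) (le_max_right _ _)
  · exact max_lt hr₀.2 (by linarith)
  · intro t ht ht1
    have hte : 1 - e ≤ t := le_trans (le_max_right _ _) ht
    have ht0 : 0 < t := by linarith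
    have h1t : 0 < 1 - t := by linarith
    have h1t2 : 0 < 1 - t^2 := by nlinarith
    have hstep : m / (t * (1 - t^2)) + k / (1 - t^2) = (m + k * t) / (t * (1 - t^2)) := by
      field_simp
    rw [hstep, div_le_div_iff₀ (by positivity) h1t]
    have key : m + k * t ≤ (1 - (1 - η)/2) * (t * (1 + t)) := by
      nlinarith [mul_nonneg hk0 h1t.le, sq_nonneg (1 - t), mul_pos ht0 h1t,
        mul_nonneg he0.le (sub_nonneg.2 hte), sq_nonneg e]
    calc (m + k * t) * (1 - t) ≤ ((1 - (1 - η)/2) * (t * (1 + t))) * (1 - t) := by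
          apply mul_le_mul_of_nonneg_right key h1t.le
      _ = (1 - (1 - η)/2) * (t * (1 - t^2)) := by ring

set_option maxHeartbeats 2000000 in
theorem stmt_9 (K : ℝ) (hK : 1 ≤ K) (hK3 : K ≤ 3) (k : ℝ) (hk : k = (K - 1) / (K + 1))
    (h g f Pf : ℂ → ℂ) (Ω : Set ℂ)
    (hf : ∀ z, f z = h z + conj (g z))
    (hh : DifferentiableOn ℂ h (Metric.ball (0 : ℂ) 1))
    (hg : DifferentiableOn ℂ g (Metric.ball (0 : ℂ) 1))
    (hsp : ∀ z ∈ Metric.ball (0 : ℂ) 1,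
      ‖deriv g z‖ < ‖deriv h z‖)
    (hinj : Set.InjOn f (Metric.ball (0 : ℂ) 1))
    (hh0 : h 0 = 0) (hg0 : g 0 = 0) (hh'0 : deriv h 0 = 1) (hg'0 : deriv g 0 = 0)
    (hqc : ∀ z ∈ Metric.ball (0 : ℂ) 1,
      ‖deriv h z‖ + ‖deriv g z‖ ≤
        K * (‖deriv h z‖ - ‖deriv g z‖))
    (hΩ : Ω = f '' Metric.ball (0 : ℂ) 1)
    (hPf : ∀ z, Pf z =
      (deriv (deriv h) z * conj (deriv h z) - deriv (deriv g) z * conj (deriv g z)) /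
        (((‖deriv h z‖) ^ 2 - (‖deriv g z‖) ^ 2 : ℝ) : ℂ))
    -- limsup_{|z|→1⁻} (1 − |z|²)·Re(z·P_f(z)) < 1 + k
    (hlimsup : ∃ m : ℝ, m < 1 + k ∧ ∃ r₀ ∈ Set.Ico (0 : ℝ) 1, ∀ z : ℂ,
      r₀ ≤ ‖z‖ → ‖z‖ < 1 →
        (1 - ‖z‖ ^ 2) * (z * Pf z).re ≤ m) :
    ∃ C > (0 : ℝ), ∃ δ ∈ Set.Ioo (0 : ℝ) 1, ∀ ζ : ℂ, ‖ζ‖ = 1 →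
      ∀ r ρ : ℝ, 0 ≤ r → r ≤ ρ → ρ < 1 →
        ‖deriv h ((ρ : ℂ) * ζ)‖ + ‖deriv g ((ρ : ℂ) * ζ)‖ ≤
          C * (‖deriv h ((r : ℂ) * ζ)‖ + ‖deriv g ((r : ℂ) * ζ)‖) *
            ((1 - ρ) / (1 - r)) ^ (δ - 1) := by
  obtain ⟨m₀, hm₀lt, r₀, hr₀, hm₀⟩ := hlimsup
  have hK1 : (0:ℝ) < K + 1 := by linarith
  have hk0 : 0 ≤ k := by rw [hk]; apply div_nonneg <;> linarith
  have hk12 : k ≤ 1/2 := by rw [hk, div_le_iff₀ hK1]; linarith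
  have hk1 : k ≤ 1 := by linarith
  set m : ℝ := max m₀ 0 with hmdef
  have hm0 : 0 ≤ m := le_max_right _ _
  have hmlt : m < 1 + k := max_lt hm₀lt (by linarith)
  have hm : ∀ z : ℂ, r₀ ≤ ‖z‖ → ‖z‖ < 1 →
      (1 - ‖z‖ ^ 2) * (z * Pf z).re ≤ m :=
    fun z h1 h2 => le_trans (hm₀ z h1 h2) (le_max_left _ _)
  set a : ℂ → ℂ := deriv h with ha
  set b : ℂ → ℂ := deriv g with hb
  have hA : AnalyticOnNhd ℂ a (ball (0:ℂ) 1) := (hh.analyticOnNhd isOpen_ball).deriv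
  have hB : AnalyticOnNhd ℂ b (ball (0:ℂ) 1) := (hg.analyticOnNhd isOpen_ball).deriv
  have haD : DifferentiableOn ℂ a (ball (0:ℂ) 1) := hA.differentiableOn
  have hbD : DifferentiableOn ℂ b (ball (0:ℂ) 1) := hB.differentiableOn
  have hane : ∀ z ∈ ball (0:ℂ) 1, a z ≠ 0 := by
    intro z hz hz0
    have := hsp z hz
    rw [hz0] at this
    simp at this
    exact absurd this (norm_nonneg _).not_gt
  have hba : ∀ z ∈ ball (0:ℂ) 1, ‖b z‖ ≤ k * ‖a z‖ := by
    intro z hz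
    have := hqc z hz
    rw [hk, div_mul_eq_mul_div, le_div_iff₀ hK1]
    nlinarith
  set ω : ℂ → ℂ := fun z => b z / a z with hω
  have hωD : DifferentiableOn ℂ ω (ball (0:ℂ) 1) := hbD.div haD hane
  have hωk : ∀ z ∈ ball (0:ℂ) 1, ‖ω z‖ ≤ k := by
    intro z hz
    rw [hω]
    simp only [norm_div]
    rw [div_le_iff₀ (norm_pos_iff.mpr (hane z hz))]
    exact hba z hz
  have hω' : ∀ z ∈ ball (0:ℂ) 1,
      HasDerivAt ω ((deriv b z * a z - b z * deriv a z) / (a z) ^ 2) z := by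
    intro z hz
    exact ((hbD.differentiableAt (isOpen_ball.mem_nhds hz)).hasDerivAt).div
      ((haD.differentiableAt (isOpen_ball.mem_nhds hz)).hasDerivAt) (hane z hz)
  have hSP : ∀ z ∈ ball (0:ℂ) 1,
      ‖a z‖ ^ 2 * ‖deriv ω z‖ * (1 - ‖z‖ ^ 2) ≤
        k * (‖a z‖ ^ 2 - ‖b z‖ ^ 2) := by
    intro z hz
    rcases eq_or_lt_of_le hk0 with hk' | hk'
    · have hb0 : ∀ w ∈ ball (0:ℂ) 1, b w = 0 := by
        intro w hw
        have := hba w hw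
        rw [← hk'] at this
        simpa using norm_eq_zero.1 (le_antisymm (by simpa using this) (norm_nonneg _))
      have hω0 : ∀ w ∈ ball (0:ℂ) 1, ω w = 0 := by
        intro w hw; rw [hω]; simp [hb0 w hw]
      have : deriv ω z = 0 := by
        have hev : ω =ᶠ[nhds z] (fun _ => 0) := by
          filter_upwards [isOpen_ball.mem_nhds hz] with w hw using hω0 w hw
        rw [hev.deriv_eq]; exact deriv_const _ _
      rw [this, hb0 z hz, ← hk']
      simp
    · have h1 := schwarz_pick hωD hk' hωk hz
      have hx : 0 < ‖a z‖ := norm_pos_iff.mpr (hane z hz)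
      have hωz : ‖ω z‖ = ‖b z‖ / ‖a z‖ := by
        rw [hω]; simp [norm_div]
      rw [hωz] at h1
      have h2 := mul_le_mul_of_nonneg_left h1
        (le_of_lt (mul_pos (mul_pos hx hx) (by positivity : (0:ℝ) < 1/k)))
      have hk'' : (0:ℝ) < k := hk'
      calc ‖a z‖ ^ 2 * ‖deriv ω z‖ * (1 - ‖z‖ ^ 2)
          = (‖a z‖ * ‖a z‖ * (1/k)) *
            (‖deriv ω z‖ * (1 - ‖z‖ ^ 2) * k) := by field_simp
        _ ≤ (‖a z‖ * ‖a z‖ * (1/k)) *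
            (k ^ 2 - (‖b z‖ / ‖a z‖) ^ 2) := h2
        _ = (k * ‖a z‖ ^ 2 - ‖b z‖ ^ 2 / k) := by field_simp
        _ ≤ k * (‖a z‖ ^ 2 - ‖b z‖ ^ 2) := by
            have hkk : ‖b z‖ ^ 2 * k ≤ ‖b z‖ ^ 2 / k := by
              rw [le_div_iff₀ hk'']
              have hkk1 : k * k ≤ 1 := by nlinarith
              nlinarith [sq_nonneg (‖b z‖)]
            nlinarith [hkk]
  -- the numeric choice
  obtain ⟨t₁, δ₀, ⟨ht₁h, ht₁r₀, ht₁1⟩, ⟨hδ₀0, hδ₀1⟩, hnum⟩ :=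
    numeric_choice k m r₀ hk0 hk12 hm0 hmlt hr₀
  set δ : ℝ := δ₀ / 2 with hδdef
  have hδ0 : 0 < δ := by positivity
  have hδ1 : δ < 1 := by rw [hδdef]; linarith
  have hδδ₀ : δ < δ₀ := by rw [hδdef]; linarith
  -- membership facts
  have hmem : ∀ (ζ : ℂ), ‖ζ‖ = 1 → ∀ t : ℝ, 0 ≤ t → t < 1 →
      ((t:ℂ) * ζ ∈ ball (0:ℂ) 1 ∧ ‖(t:ℂ) * ζ‖ = t) := by
    intro ζ hζ t ht0 ht1
    have habs : ‖(t:ℂ) * ζ‖ = t := by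
      rw [norm_mul, Complex.norm_real, Real.norm_eq_abs, hζ, mul_one, _root_.abs_of_nonneg ht0]
    exact ⟨by rw [mem_ball, Complex.dist_eq, sub_zero, habs]; exact ht1, habs⟩
  -- the radial function
  set lam : ℂ → ℝ → ℝ := fun ζ s => ‖a ((s:ℂ) * ζ)‖ + ‖b ((s:ℂ) * ζ)‖
    with hlam
  have hlampos : ∀ (ζ : ℂ), ‖ζ‖ = 1 → ∀ t : ℝ, 0 ≤ t → t < 1 → 0 < lam ζ t := by
    intro ζ hζ t ht0 ht1
    obtain ⟨hz, _⟩ := hmem ζ hζ t ht0 ht1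
    have := norm_pos_iff.mpr (hane _ hz)
    have := norm_nonneg (b ((t:ℂ) * ζ))
    rw [hlam]
    dsimp only
    linarith
  have hlamcont : ∀ (ζ : ℂ), ‖ζ‖ = 1 → ∀ x y : ℝ, 0 ≤ x → y < 1 →
      ContinuousOn (lam ζ) (Icc x y) := by
    intro ζ hζ x y hx0 hy1
    have hmap : MapsTo (fun s : ℝ => (s:ℂ) * ζ) (Icc x y) (ball (0:ℂ) 1) := by
      intro s hs
      exact (hmem ζ hζ s (le_trans hx0 hs.1) (lt_of_le_of_lt hs.2 hy1)).1
    have hcur : ContinuousOn (fun s : ℝ => (s:ℂ) * ζ) (Icc x y) :=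
      (Complex.continuous_ofReal.mul continuous_const).continuousOn
    exact ((continuous_norm.comp_continuousOn
        (haD.continuousOn.comp hcur hmap)).add
      (continuous_norm.comp_continuousOn (hbD.continuousOn.comp hcur hmap)))
  -- key slope estimate
  have hkey : ∀ (ζ : ℂ), ‖ζ‖ = 1 → ∀ t : ℝ, t₁ ≤ t → t < 1 →
      ∀ R : ℝ, ((1 - δ₀)/(1 - t)) * lam ζ t < R →
      ∃ᶠ w in nhdsWithin t (Set.Ioi t), slope (lam ζ) t w < R := by
    intro ζ hζ t ht₁ ht1 R hR
    have ht0 : 0 < t := by linarith only [ht₁h, ht₁]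
    obtain ⟨hz, habs⟩ := hmem ζ hζ t (by linarith only [ht₁h, ht₁]) ht1
    set z : ℂ := (t:ℂ) * ζ with hzdef
    have h1t : 0 < 1 - t := by linarith only [ht1]
    have h1t2 : 0 < 1 - t^2 := by nlinarith only [ht0, ht1]
    set x : ℝ := ‖a z‖ with hxdef
    set y : ℝ := ‖b z‖ with hydef
    have hx : 0 < x := norm_pos_iff.mpr (hane z hz)
    have hyx : y < x := hsp z hz
    have hy0 : 0 ≤ y := norm_nonneg _
    set s : ℝ := (ζ * deriv a z * conj (a z)).re with hsdef
    set u : ℝ := (ζ * deriv b z * conj (b z)).re with hudef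
    set M : ℝ := m / (t * (1 - t^2)) with hMdef
    set Kp : ℝ := k / (1 - t^2) with hKpdef
    have hx2y2 : 0 < x^2 - y^2 := by nlinarith only [hyx, hy0]
    have hlamval : lam ζ t = x + y := by rw [hlam]
    have hnum' : M + Kp ≤ (1 - δ₀)/(1 - t) := hnum t ht₁ ht1
    -- the hypothesis from the limsup bound
    have hre : (z * Pf z).re = t * (s - u) / (x^2 - y^2) := by
      rw [hPf z, ← mul_div_assoc, Complex.div_ofReal_re]
      congr 1
      have hznum : z * (deriv a z * conj (a z) - deriv b z * conj (b z)) =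
          (t:ℂ) * (ζ * deriv a z * conj (a z) - ζ * deriv b z * conj (b z)) := by
        rw [hzdef]; ring
      rw [hznum, Complex.re_ofReal_mul, Complex.sub_re]
    have hlim := hm z (by rw [habs]; exact le_trans ht₁r₀ ht₁) (by rw [habs]; exact ht1)
    rw [hre, habs] at hlim
    have h1 : s - u ≤ M * (x^2 - y^2) := by
      rw [hMdef, div_mul_eq_mul_div, le_div_iff₀ (mul_pos ht0 h1t2)]
      rw [mul_div_assoc'] at hlim
      have h1' := (div_le_iff₀ hx2y2).1 hlim
      nlinarith only [h1']
    -- the Schwarz–Pick input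
    have hSPz := hSP z hz
    rw [habs, ← hxdef, ← hydef] at hSPz
    -- case split on `b z = 0`
    by_cases hbz : b z = 0
    · -- exceptional case
      have hyzero : y = 0 := by rw [hydef, hbz]; simp
      set L : ℝ := ‖deriv b z‖ with hLdef
      have homega : deriv ω z = deriv b z / a z := by
        have hai := hane z hz
        rw [(hω' z hz).deriv, hbz, div_eq_div_iff (pow_ne_zero 2 hai) hai]
        ring
      have hLx : ‖deriv ω z‖ = L / x := by rw [homega, norm_div]
      have hLbound : L ≤ Kp * x := by
        rw [hLx, hyzero] at hSPz
        have hxx : x^2 * (L/x) * (1 - t^2) = x * (L * (1 - t^2)) := by field_simp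
        rw [hxx] at hSPz
        have hkx : k * (x^2 - 0^2) = x * (k * x) := by ring
        rw [hkx] at hSPz
        have hll := (mul_le_mul_iff_right₀ hx).1 hSPz
        rw [hKpdef, div_mul_eq_mul_div, le_div_iff₀ h1t2]
        linarith only [hll]
      have hs1 : s ≤ M * x^2 := by
        have hu : u = 0 := by rw [hudef, hbz]; simp
        rw [hu, hyzero] at h1
        nlinarith only [h1]
      have hfub : s/x + L ≤ ((1 - δ₀)/(1 - t)) * lam ζ t := by
        have h₁ : s/x ≤ M * x := by rw [div_le_iff₀ hx]; nlinarith only [hs1]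
        have h₂ : s/x + L ≤ (M + Kp) * (x + y) := by
          rw [hyzero]; nlinarith only [hLbound, h₁]
        rw [hlamval]
        calc s/x + L ≤ (M + Kp) * (x + y) := h₂
          _ ≤ ((1 - δ₀)/(1 - t)) * (x + y) := by
              apply mul_le_mul_of_nonneg_right hnum' (by linarith only [hx, hy0])
      set ε : ℝ := (R - (s/x + L))/2 with hεdef
      have hε : 0 < ε := by
        have := lt_of_le_of_lt hfub hR
        rw [hεdef]; linarith only [this]
      have hda := curve_abs_hasDerivAt (curve_hasDerivAt a haD ζ t hz) (hane z hz)
      have hd1 : HasDerivAt (fun s' : ℝ => ‖a ((s':ℂ) * ζ)‖) (s/x) t := by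
        convert hda using 1
      have hev1 : ∀ᶠ w in nhdsWithin t (Set.Ioi t),
          slope (fun s' : ℝ => ‖a ((s':ℂ) * ζ)‖) t w < s/x + ε :=
        (hd1.hasDerivWithinAt (s := Set.Ioi t)).limsup_slope_le' (lt_irrefl t)
          (by linarith only [hε])
      have hcb : ContinuousAt (deriv b) z := (hB.deriv z hz).continuousAt
      obtain ⟨ρ₀, hρ₀pos, hρ₀⟩ := Metric.continuousAt_iff.1 hcb ε hε
      set w₁ : ℝ := min (t + ρ₀/2) ((t+1)/2) with hw₁def
      have hw₁t : t < w₁ := by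
        rw [hw₁def]; apply lt_min <;> linarith only [hρ₀pos, ht1]
      have hw₁1 : w₁ < 1 := by
        rw [hw₁def]
        exact lt_of_le_of_lt (min_le_right _ _) (by linarith only [ht1])
      have hw₁ρ : w₁ ≤ t + ρ₀/2 := min_le_left _ _
      have hev2 : ∀ᶠ w : ℝ in nhdsWithin t (Set.Ioi t),
          ‖b ((w:ℂ) * ζ)‖ ≤ (L + ε) * (w - t) := by
        filter_upwards [Ioc_mem_nhdsGT_of_mem ⟨le_refl t, hw₁t⟩] with w hw
        have hwt : t < w := hw.1
        have hww₁ : w ≤ w₁ := hw.2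
        have hder : ∀ v ∈ Icc t w, HasDerivWithinAt (fun s' : ℝ => b ((s':ℂ) * ζ))
            (ζ * deriv b ((v:ℂ) * ζ)) (Icc t w) v := by
          intro v hv
          have hvmem : ((v:ℂ) * ζ) ∈ ball (0:ℂ) 1 :=
            (hmem ζ hζ v (by linarith only [hv.1, ht0])
              (by linarith only [hv.2, hww₁, hw₁1])).1
          exact (curve_hasDerivAt b hbD ζ v hvmem).hasDerivWithinAt
        have hbound : ∀ v ∈ Icc t w, ‖ζ * deriv b ((v:ℂ) * ζ)‖ ≤ L + ε := by
          intro v hv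
          have hdist : dist ((v:ℂ) * ζ) z < ρ₀ := by
            rw [hzdef, Complex.dist_eq]
            have hdiff : (v:ℂ) * ζ - (t:ℂ) * ζ = ((v - t : ℝ):ℂ) * ζ := by push_cast; ring
            rw [hdiff, norm_mul, Complex.norm_real, Real.norm_eq_abs, hζ, mul_one,
              _root_.abs_of_nonneg (by linarith only [hv.1])]
            linarith only [hv.2, hww₁, hw₁ρ, hρ₀pos]
          have hd2 := hρ₀ hdist
          rw [Complex.dist_eq] at hd2
          rw [norm_mul, hζ, one_mul]
          have htri : ‖deriv b ((v:ℂ) * ζ)‖ ≤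
              ‖deriv b ((v:ℂ) * ζ) - deriv b z‖ + ‖deriv b z‖ := by
            have := norm_add_le (deriv b ((v:ℂ) * ζ) - deriv b z) (deriv b z)
            simpa using this
          rw [hLdef]
          linarith only [htri, hd2]
        have hseg := norm_image_sub_le_of_norm_deriv_le_segment' hder
          (fun v hv => hbound v (Ico_subset_Icc_self hv)) w
          (right_mem_Icc.2 hwt.le)
        have hbt : b ((t:ℂ) * ζ) = 0 := by rw [← hzdef]; exact hbz
        rw [hbt, sub_zero] at hseg
        linarith only [hseg]
      have hev3 : ∀ᶠ w in nhdsWithin t (Set.Ioi t), slope (lam ζ) t w < R := by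
        filter_upwards [hev1, hev2, self_mem_nhdsWithin] with w h1w h2w hwmem
        have hwt : t < w := hwmem
        have habt : ‖b ((t:ℂ) * ζ)‖ = 0 := by
          rw [← hzdef, hbz]; simp
        have hslope_eq : slope (lam ζ) t w =
            slope (fun s' : ℝ => ‖a ((s':ℂ) * ζ)‖) t w +
              ‖b ((w:ℂ) * ζ)‖ / (w - t) := by
          simp only [hlam, slope_def_field]
          rw [habt]
          ring
        have hdiv : ‖b ((w:ℂ) * ζ)‖ / (w - t) ≤ L + ε := by
          rw [div_le_iff₀ (by linarith only [hwt] : (0:ℝ) < w - t)]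
          linarith only [h2w]
        rw [hslope_eq]
        have hRval : R = s/x + L + 2*ε := by rw [hεdef]; ring
        linarith only [h1w, hdiv, hRval]
      exact hev3.frequently
    · -- generic case: `b z ≠ 0`
      have hy : 0 < y := norm_pos_iff.mpr hbz
      have hxc : a z * conj (a z) = ((x^2 : ℝ) : ℂ) := by
        rw [Complex.mul_conj, Complex.normSq_eq_norm_sq]
      have hyc : b z * conj (b z) = ((y^2 : ℝ) : ℂ) := by
        rw [Complex.mul_conj, Complex.normSq_eq_norm_sq]
      have hWrel : deriv b z * a z - deriv a z * b z = deriv ω z * (a z)^2 := by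
        rw [(hω' z hz).deriv, div_mul_cancel₀ _ (pow_ne_zero 2 (hane z hz))]
        ring
      have e2 : u * x^2 - s * y^2 = (ζ * conj (a z) * conj (b z) * (deriv ω z * (a z)^2)).re := by
        have h₁ : ζ * conj (a z) * conj (b z) * (deriv ω z * (a z)^2) =
            ((x^2:ℝ):ℂ) * (ζ * deriv b z * conj (b z)) -
              ((y^2:ℝ):ℂ) * (ζ * deriv a z * conj (a z)) := by
          rw [← hxc, ← hyc, ← hWrel]; ring
        rw [h₁, Complex.sub_re, Complex.re_ofReal_mul, Complex.re_ofReal_mul]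
        ring
      have h2 : u * x^2 - s * y^2 ≤ Kp * (x*y) * (x^2 - y^2) := by
        have hle : (ζ * conj (a z) * conj (b z) * (deriv ω z * (a z)^2)).re ≤
            x^2 * ‖deriv ω z‖ * (x * y) := by
          refine le_trans (Complex.re_le_norm _) ?_
          rw [norm_mul, norm_mul, norm_mul, norm_mul, norm_pow, Complex.norm_conj, Complex.norm_conj, hζ]
          rw [← hxdef, ← hydef]
          ring_nf
          exact le_refl _
        have hmul := mul_le_mul_of_nonneg_right hSPz
          (by positivity : (0:ℝ) ≤ (x*y)/(1 - t^2))
        have hL1' : x^2 * ‖deriv ω z‖ * (1 - t^2) * ((x*y)/(1 - t^2)) =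
            x^2 * ‖deriv ω z‖ * (x*y) := by field_simp
        have hR1' : k * (x^2 - y^2) * ((x*y)/(1 - t^2)) = Kp * (x*y) * (x^2 - y^2) := by
          rw [hKpdef]; field_simp
        rw [hL1', hR1'] at hmul
        rw [e2]
        exact le_trans hle hmul
      have hble : s/x + u/y ≤ (M + Kp) * (x + y) := core_alg x y s u M Kp hx hy hyx h1 h2
      have hfub : s/x + u/y ≤ ((1 - δ₀)/(1 - t)) * lam ζ t := by
        rw [hlamval]
        exact le_trans hble (mul_le_mul_of_nonneg_right hnum'
          (by linarith only [hx, hy0]))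
      have hda := curve_abs_hasDerivAt (curve_hasDerivAt a haD ζ t hz) (hane z hz)
      have hdb := curve_abs_hasDerivAt (curve_hasDerivAt b hbD ζ t hz) hbz
      have hd : HasDerivAt (lam ζ) (s/x + u/y) t := by
        have hsum := hda.add hdb
        exact hsum
      exact (hd.hasDerivWithinAt (s := Set.Ici t)).liminf_right_slope_le
        (lt_of_le_of_lt hfub hR)
  -- main decay estimate along radii
  have hL1 : ∀ (ζ : ℂ), ‖ζ‖ = 1 → ∀ x y : ℝ, t₁ ≤ x → x ≤ y → y < 1 →
      lam ζ y ≤ lam ζ x * ((1 - x)/(1 - y)) ^ (1 - δ) := by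
    intro ζ hζ x y hx₁ hxy hy1
    have hx0 : (0:ℝ) ≤ x := by linarith only [ht₁h, hx₁]
    have hx1 : x < 1 := lt_of_le_of_lt hxy hy1
    have h1x : (0:ℝ) < 1 - x := by linarith only [hx1]
    have h1y : (0:ℝ) < 1 - y := by linarith only [hy1]
    set c₀ : ℝ := lam ζ x * (1 - x) ^ (1 - δ) with hc₀
    have hc₀pos : 0 < c₀ :=
      mul_pos (hlampos ζ hζ x hx0 hx1) (Real.rpow_pos_of_pos h1x _)
    set B : ℝ → ℝ := fun s' => c₀ * (1 - s') ^ (δ - 1) with hBdef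
    set B' : ℝ → ℝ := fun s' => c₀ * ((1 - δ) * (1 - s') ^ (δ - 2)) with hB'def
    have hBderiv : ∀ s' ∈ Icc x y, HasDerivAt B (B' s') s' := by
      intro s' hs'
      have h1s : (0:ℝ) < 1 - s' := by linarith only [hs'.2, h1y]
      have hinner : HasDerivAt (fun q : ℝ => 1 - q) (-1) s' := by
        simpa using ((hasDerivAt_id s').const_sub 1)
      have houter : HasDerivAt (fun p : ℝ => p ^ (δ - 1))
          ((δ-1) * (1 - s') ^ (δ - 1 - 1)) (1 - s') :=
        Real.hasDerivAt_rpow_const (Or.inl h1s.ne')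
      have hcomp := houter.comp s' hinner
      have hcomp' : HasDerivAt (fun q : ℝ => (1 - q) ^ (δ - 1))
          ((δ-1) * (1 - s') ^ (δ - 1 - 1) * (-1)) s' := hcomp
      have hfin : HasDerivAt (fun q : ℝ => (1 - q) ^ (δ - 1))
          ((1 - δ) * (1 - s') ^ (δ - 2)) s' := by
        convert hcomp' using 1
        have hexp : δ - 1 - 1 = δ - 2 := by ring
        rw [hexp]
        ring
      have := hfin.const_mul c₀
      simpa [hBdef, hB'def] using this
    have hBcont : ContinuousOn B (Icc x y) :=
      fun s' hs' => (hBderiv s' hs').continuousAt.continuousWithinAt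
    have hBx : B x = lam ζ x := by
      simp only [hBdef]
      rw [hc₀]
      have : (1 - x) ^ (1 - δ) * (1 - x) ^ (δ - 1) = 1 := by
        rw [← Real.rpow_add h1x]
        norm_num
      calc lam ζ x * (1 - x) ^ (1 - δ) * (1 - x) ^ (δ - 1)
          = lam ζ x * ((1 - x) ^ (1 - δ) * (1 - x) ^ (δ - 1)) := by ring
        _ = lam ζ x := by rw [this, mul_one]
    have hbound : ∀ s' ∈ Ico x y, lam ζ s' = B s' →
        ((1 - δ₀)/(1 - s')) * lam ζ s' < B' s' := by
      intro s' hs' hcontact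
      have h1s : (0:ℝ) < 1 - s' := by linarith only [hs'.2, h1y]
      have hlp : 0 < lam ζ s' :=
        hlampos ζ hζ s' (le_trans hx0 hs'.1) (lt_trans hs'.2 hy1)
      have hpow : (1 - s') ^ (δ - 1) = (1 - s') ^ (δ - 2) * (1 - s') := by
        rw [← Real.rpow_add_one h1s.ne' (δ - 2)]
        congr 1
        ring
      have hBs : B' s' = ((1 - δ)/(1 - s')) * B s' := by
        simp only [hBdef, hB'def]
        rw [hpow]
        field_simp
      rw [hBs, ← hcontact]
      have hfrac : (1 - δ₀)/(1 - s') < (1 - δ)/(1 - s') :=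
        div_lt_div_of_pos_right (by linarith only [hδδ₀]) h1s
      exact mul_lt_mul_of_pos_right hfrac hlp
    have main := image_le_of_liminf_slope_right_lt_deriv_boundary'
      (f := lam ζ) (f' := fun s' => ((1 - δ₀)/(1 - s')) * lam ζ s')
      (hlamcont ζ hζ x y hx0 hy1)
      (fun s' hs' R hR => hkey ζ hζ s' (le_trans hx₁ hs'.1) (lt_trans hs'.2 hy1) R hR)
      (le_of_eq hBx.symm) hBcont
      (fun s' hs' => (hBderiv s' (Ico_subset_Icc_self hs')).hasDerivWithinAt)
      hbound (right_mem_Icc.2 hxy)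
    have hBy : B y = lam ζ x * ((1 - x)/(1 - y)) ^ (1 - δ) := by
      simp only [hBdef]
      rw [hc₀, Real.div_rpow h1x.le h1y.le]
      have hneg : (1 - y) ^ (δ - 1) = ((1 - y) ^ (1 - δ))⁻¹ := by
        rw [show (δ - 1) = -(1 - δ) by ring, Real.rpow_neg h1y.le]
      rw [hneg]
      field_simp
    rw [← hBy]
    exact main
  -- constants from compactness
  have ht₁0 : (0:ℝ) ≤ t₁ := by linarith only [ht₁h]
  have hSsub : closedBall (0:ℂ) t₁ ⊆ ball (0:ℂ) 1 := closedBall_subset_ball ht₁1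
  have hScomp : IsCompact (closedBall (0:ℂ) t₁) := isCompact_closedBall _ _
  have hSne : (closedBall (0:ℂ) t₁).Nonempty := ⟨0, by simpa using ht₁0⟩
  have hlamcCont : ContinuousOn (fun w : ℂ => ‖a w‖ + ‖b w‖)
      (closedBall (0:ℂ) t₁) :=
    ((continuous_norm.comp_continuousOn (haD.continuousOn.mono hSsub)).add
      (continuous_norm.comp_continuousOn (hbD.continuousOn.mono hSsub)))
  obtain ⟨zM, hzM, hMax⟩ := hScomp.exists_isMaxOn hSne hlamcCont
  obtain ⟨zm, hzm, hMin⟩ := hScomp.exists_isMinOn hSne hlamcCont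
  set Cm : ℝ := ‖a zM‖ + ‖b zM‖ with hCmdef
  set cm : ℝ := ‖a zm‖ + ‖b zm‖ with hcmdef
  have hcm : 0 < cm := by
    have h1 := norm_pos_iff.mpr (hane zm (hSsub hzm))
    have h2 := norm_nonneg (b zm)
    rw [hcmdef]; linarith only [h1, h2]
  have hCmcm : cm ≤ Cm := hMin hzM
  have hCm : 0 < Cm := lt_of_lt_of_le hcm hCmcm
  have hC1 : 1 ≤ Cm / cm := (one_le_div hcm).2 hCmcm
  refine ⟨Cm / cm, by positivity, δ, ⟨hδ0, hδ1⟩, ?_⟩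
  intro ζ hζ r ρ hr0 hrρ hρ1
  have hr1 : r < 1 := lt_of_le_of_lt hrρ hρ1
  have hρ0 : (0:ℝ) ≤ ρ := le_trans hr0 hrρ
  have h1ρ : (0:ℝ) < 1 - ρ := by linarith only [hρ1]
  have h1r : (0:ℝ) < 1 - r := by linarith only [hr1]
  have hmemS : ∀ t : ℝ, 0 ≤ t → t ≤ t₁ → ((t:ℂ) * ζ) ∈ closedBall (0:ℂ) t₁ := by
    intro t ht0 htt₁
    rw [mem_closedBall, Complex.dist_eq, sub_zero, norm_mul, Complex.norm_real, Real.norm_eq_abs, hζ,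
      mul_one, _root_.abs_of_nonneg ht0]
    exact htt₁
  have hgoalρ : ‖a ((ρ:ℂ) * ζ)‖ + ‖b ((ρ:ℂ) * ζ)‖ = lam ζ ρ := rfl
  have hgoalr : ‖a ((r:ℂ) * ζ)‖ + ‖b ((r:ℂ) * ζ)‖ = lam ζ r := rfl
  rw [hgoalρ, hgoalr]
  have hlamr : 0 < lam ζ r := hlampos ζ hζ r hr0 hr1
  have hflip : ((1 - ρ)/(1 - r)) ^ (δ - 1) = ((1 - r)/(1 - ρ)) ^ (1 - δ) := by
    rw [show (δ - 1) = -(1 - δ) by ring, Real.rpow_neg (by positivity),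
      ← Real.inv_rpow (by positivity), inv_div]
  rcases le_or_gt ρ t₁ with hcase | hcase
  · have h₁ : lam ζ ρ ≤ Cm := hMax (hmemS ρ hρ0 hcase)
    have h₂ : cm ≤ lam ζ r := hMin (hmemS r hr0 (le_trans hrρ hcase))
    have hfac : 1 ≤ ((1 - ρ)/(1 - r)) ^ (δ - 1) := by
      have hbase1 : (1 - ρ)/(1 - r) ≤ 1 := by
        rw [div_le_one h1r]; linarith only [hrρ]
      have hbase0 : 0 < (1 - ρ)/(1 - r) := by positivity
      have := Real.rpow_le_rpow_of_exponent_ge hbase0 hbase1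
        (by linarith only [hδ1] : δ - 1 ≤ (0:ℝ))
      rwa [Real.rpow_zero] at this
    calc lam ζ ρ ≤ Cm := h₁
      _ = (Cm / cm) * cm := by field_simp
      _ ≤ (Cm / cm) * lam ζ r := by
          apply mul_le_mul_of_nonneg_left h₂ (by positivity)
      _ = (Cm / cm) * lam ζ r * 1 := (mul_one _).symm
      _ ≤ (Cm / cm) * lam ζ r * ((1 - ρ)/(1 - r)) ^ (δ - 1) := by
          apply mul_le_mul_of_nonneg_left hfac (by positivity)
  · rcases le_or_gt t₁ r with hcase2 | hcase2
    · have hL := hL1 ζ hζ r ρ hcase2 hrρ hρ1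
      rw [hflip]
      calc lam ζ ρ ≤ lam ζ r * ((1 - r)/(1 - ρ)) ^ (1 - δ) := hL
        _ ≤ (Cm / cm) * lam ζ r * ((1 - r)/(1 - ρ)) ^ (1 - δ) := by
            apply mul_le_mul_of_nonneg_right _
              (Real.rpow_nonneg (div_nonneg h1r.le h1ρ.le) _)
            have hmm := mul_le_mul_of_nonneg_right hC1 hlamr.le
            rw [one_mul] at hmm
            exact hmm
    · have hL := hL1 ζ hζ t₁ ρ (le_refl t₁) hcase.le hρ1
      rw [hflip]
      have h₂ : cm ≤ lam ζ r := hMin (hmemS r hr0 hcase2.le)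
      have h₁ : lam ζ t₁ ≤ Cm := hMax (hmemS t₁ ht₁0 (le_refl t₁))
      have hmono : ((1 - t₁)/(1 - ρ)) ^ (1 - δ) ≤ ((1 - r)/(1 - ρ)) ^ (1 - δ) := by
        apply Real.rpow_le_rpow (div_nonneg (by linarith only [ht₁1]) h1ρ.le) _
          (by linarith only [hδ1])
        exact (div_le_div_iff_of_pos_right h1ρ).2 (by linarith only [hcase2])
      calc lam ζ ρ ≤ lam ζ t₁ * ((1 - t₁)/(1 - ρ)) ^ (1 - δ) := hL
        _ ≤ Cm * ((1 - r)/(1 - ρ)) ^ (1 - δ) := by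
            apply mul_le_mul h₁ hmono
              (Real.rpow_nonneg (div_nonneg (by linarith only [ht₁1]) h1ρ.le) _) hCm.le
        _ = (Cm / cm) * cm * ((1 - r)/(1 - ρ)) ^ (1 - δ) := by field_simp
        _ ≤ (Cm / cm) * lam ζ r * ((1 - r)/(1 - ρ)) ^ (1 - δ) := by
            apply mul_le_mul_of_nonneg_right _
              (Real.rpow_nonneg (div_nonneg h1r.le h1ρ.le) _)
            apply mul_le_mul_of_nonneg_left h₂ (by positivity)
end
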